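/- arXiv:2604.04328 — 2 statements merged into one kernel-verified Lean document; each statement's English description precedes it below -/
import Mathlib

section
/- (Condorcet uniqueness, Top Cycle) Let P be a probabilistic tournament on n agents satisfying the margin assumption with margin δ > 0, with path-length parameter K ≥ 1, and suppose a* is a Condorcet winner, i.e. P_{a*b} > 1/2 for all b ≠ a*. Then for all sufficiently small τ > 0, a* uniquely maximizes the soft Top-Cycle score: t_τ(a*) > max_{a ≠ a*} t_τ(a). -/
open Filter Topology

/-- The logistic sigmoid. -/
noncomputable def sigmoid (z : ℝ) : ℝ := 1 / (1 + Real.exp (-z))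

/-- Soft majority edge matrix `D_τ`. -/
noncomputable def softEdge {n : ℕ} (P : Matrix (Fin n) (Fin n) ℝ) (τ : ℝ) :
    Matrix (Fin n) (Fin n) ℝ := fun a b => sigmoid ((P a b - 1/2) / τ)

/-- 0/1 adjacency matrix of the hard majority tournament. -/
noncomputable def hardAdj {n : ℕ} (P : Matrix (Fin n) (Fin n) ℝ) : Matrix (Fin n) (Fin n) ℝ :=
  fun a b => if 1/2 < P a b then 1 else 0

/-- Soft reachability matrix `R_τ = Σ_{k=1}^K D_τ^k`. -/
noncomputable def softReach {n : ℕ} (P : Matrix (Fin n) (Fin n) ℝ) (τ : ℝ) (K : ℕ) :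
    Matrix (Fin n) (Fin n) ℝ := ∑ k ∈ Finset.Icc 1 K, softEdge P τ ^ k

/-- softmin over a finite family. -/
noncomputable def softmin {ι : Type*} (τ : ℝ) (s : Finset ι) (f : ι → ℝ) : ℝ :=
  -τ * Real.log (∑ i ∈ s, Real.exp (-(f i) / τ))

/-- scalar soft maximum over a finite family. -/
noncomputable def smax {ι : Type*} (τ : ℝ) (s : Finset ι) (f : ι → ℝ) : ℝ :=
  τ * Real.log (∑ i ∈ s, Real.exp (f i / τ))

/-- Soft Top-Cycle membership score `t_τ(a)`. -/
noncomputable def tcScore {n : ℕ} (P : Matrix (Fin n) (Fin n) ℝ) (τ : ℝ) (K : ℕ) (a : Fin n) : ℝ :=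
  softmin τ ({a}ᶜ : Finset (Fin n)) (fun b => softReach P τ K a b)

/-- Soft cover score `cover_τ(c, a)`. -/
noncomputable def coverScore {n : ℕ} (P : Matrix (Fin n) (Fin n) ℝ) (τ : ℝ) (c a : Fin n) : ℝ :=
  softEdge P τ c a *
    (1 - smax τ (Finset.univ : Finset (Fin n)) (fun b => softEdge P τ a b - softEdge P τ c b))

/-- Soft Uncovered-Set membership score `u_τ(a)`. -/
noncomputable def ucScore {n : ℕ} (P : Matrix (Fin n) (Fin n) ℝ) (τ : ℝ) (a : Fin n) : ℝ :=
  1 - smax τ ({a}ᶜ : Finset (Fin n)) (fun c => coverScore P τ c a)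

/-- `a ≻ b` in the hard majority tournament. -/
def beats {n : ℕ} (P : Matrix (Fin n) (Fin n) ℝ) (a b : Fin n) : Prop := 1/2 < P a b

/-- `a` reaches `b` via a directed path in the hard majority tournament. -/
def reaches {n : ℕ} (P : Matrix (Fin n) (Fin n) ℝ) : Fin n → Fin n → Prop :=
  Relation.TransGen (beats P)

/-- `c` covers `a` in the hard majority tournament. -/
def covers {n : ℕ} (P : Matrix (Fin n) (Fin n) ℝ) (c a : Fin n) : Prop :=
  beats P c a ∧ ∀ b, beats P a b → beats P c b

/-- membership in the Top Cycle of the hard majority tournament. -/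
def inTopCycle {n : ℕ} (P : Matrix (Fin n) (Fin n) ℝ) (a : Fin n) : Prop :=
  ∀ b, b ≠ a → reaches P a b

/-- membership in the Uncovered Set of the hard majority tournament. -/
def inUncovered {n : ℕ} (P : Matrix (Fin n) (Fin n) ℝ) (a : Fin n) : Prop :=
  ∀ c, c ≠ a → ¬ covers P c a

/-- `P` is a probabilistic tournament. -/
def IsProbTournament {n : ℕ} (P : Matrix (Fin n) (Fin n) ℝ) : Prop :=
  (∀ a b, 0 ≤ P a b ∧ P a b ≤ 1) ∧ (∀ a b, P a b + P b a = 1) ∧ ∀ a, P a a = 1/2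

/-- margin assumption with margin `δ`. -/
def HasMargin {n : ℕ} (P : Matrix (Fin n) (Fin n) ℝ) (δ : ℝ) : Prop :=
  ∀ a b, a ≠ b → δ ≤ |P a b - 1/2|

/-! As `τ → 0⁺`, `sigmoid (x / τ)` tends to `(1 + sign x) / 2`, so `D_τ` converges to the
majority matrix `D₀`. For a Condorcet winner `a*`, row `a*` of `D₀` is `1` off the diagonal and
column `a*` is `0` off the diagonal; no walk of `D₀` enters `a*`, so `R_τ(a, a*) → 0` for `a ≠ a*`,
while the limit of `R_τ(a*, b)` is at least `1`. Since `min f - τ log m ≤ softmin_τ f ≤ min f`,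
eventually `t_τ(a) < 1/2 < t_τ(a*)`. -/

open Finset

lemma sigmoid_eq_real_sigmoid : sigmoid = Real.sigmoid := by
  funext z
  simp [sigmoid, Real.sigmoid_def]

lemma tendsto_sigmoid_div_nhdsGT_zero (x : ℝ) :
    Tendsto (fun τ => sigmoid (x / τ)) (𝓝[>] 0) (𝓝 ((1 + Real.sign x) / 2)) := by
  simp only [sigmoid_eq_real_sigmoid, div_eq_mul_inv x]
  rcases lt_trichotomy x 0 with hx | rfl | hx
  · rw [Real.sign_of_neg hx, add_neg_cancel, zero_div]
    exact Real.tendsto_sigmoid_atBot.comp (tendsto_inv_nhdsGT_zero.const_mul_atTop_of_neg hx)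
  · simp [Real.sigmoid_zero]
  · rw [Real.sign_of_pos hx, show ((1 : ℝ) + 1) / 2 = 1 by norm_num]
    exact Real.tendsto_sigmoid_atTop.comp (tendsto_inv_nhdsGT_zero.const_mul_atTop hx)

theorem Matrix.pow_apply_eq_zero_of_forall_ne_apply_eq_zero {ι α : Type*} [Fintype ι]
    [DecidableEq ι] [Semiring α] {M : Matrix ι ι α} {b : ι} (hM : ∀ c, c ≠ b → M c b = 0)
    (k : ℕ) {a : ι} (ha : a ≠ b) : (M ^ k) a b = 0 := by
  induction k with
  | zero => exact Matrix.one_apply_ne ha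
  | succ k ih =>
    rw [pow_succ, Matrix.mul_apply,
      Finset.sum_eq_single b (fun c _ hc => by rw [hM c hc, mul_zero]) (by simp), ih, zero_mul]

section Softmin

variable {ι : Type*} {τ : ℝ} {s : Finset ι} {f : ι → ℝ}

lemma softmin_le (hτ : 0 < τ) {i : ι} (hi : i ∈ s) : softmin τ s f ≤ f i := by
  have hsum : Real.exp (-f i / τ) ≤ ∑ j ∈ s, Real.exp (-f j / τ) :=
    single_le_sum (f := fun j => Real.exp (-f j / τ)) (fun j _ => (Real.exp_pos _).le) hi
  have hlog : -f i / τ ≤ Real.log (∑ j ∈ s, Real.exp (-f j / τ)) := by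
    simpa using Real.log_le_log (Real.exp_pos _) hsum
  rw [div_le_iff₀ hτ] at hlog
  rw [softmin]
  linarith

lemma sub_mul_log_card_le_softmin (hτ : 0 < τ) (hs : s.Nonempty) {c : ℝ}
    (hc : ∀ i ∈ s, c ≤ f i) : c - τ * Real.log #s ≤ softmin τ s f := by
  have hsum : ∑ j ∈ s, Real.exp (-f j / τ) ≤ #s * Real.exp (-c / τ) := by
    simpa using sum_le_card_nsmul s _ _ fun j hj =>
      Real.exp_le_exp.2 (div_le_div_of_nonneg_right (neg_le_neg (hc j hj)) hτ.le)
  have hcard : (0 : ℝ) < #s := by exact_mod_cast hs.card_pos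
  have hlog : Real.log (∑ j ∈ s, Real.exp (-f j / τ)) ≤ Real.log #s + -c / τ := by
    have := Real.log_le_log (sum_pos (fun j _ => Real.exp_pos _) hs) hsum
    rwa [Real.log_mul hcard.ne' (Real.exp_ne_zero _), Real.log_exp] at this
  have hscaled := mul_le_mul_of_nonneg_left hlog hτ.le
  rw [mul_add, mul_div_cancel₀ _ hτ.ne'] at hscaled
  rw [softmin]
  linarith

end Softmin

noncomputable def majorityEdge {n : ℕ} (P : Matrix (Fin n) (Fin n) ℝ) :
    Matrix (Fin n) (Fin n) ℝ :=
  fun a b => (1 + Real.sign (P a b - 1/2)) / 2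

section Majority

variable {n : ℕ} {P : Matrix (Fin n) (Fin n) ℝ}

lemma majorityEdge_nonneg (a b : Fin n) : 0 ≤ majorityEdge P a b := by
  rcases Real.sign_apply_eq (P a b - 1/2) with h | h | h <;>
    simp only [majorityEdge, h] <;> norm_num

lemma majorityEdge_eq_one {a b : Fin n} (h : 1/2 < P a b) : majorityEdge P a b = 1 := by
  show (1 + Real.sign (P a b - 1/2)) / 2 = 1
  rw [Real.sign_of_pos (sub_pos.2 h)]
  norm_num

lemma majorityEdge_eq_zero {a b : Fin n} (h : P a b < 1/2) : majorityEdge P a b = 0 := by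
  show (1 + Real.sign (P a b - 1/2)) / 2 = 0
  rw [Real.sign_of_neg (sub_neg.2 h)]
  norm_num

variable (P) in
lemma tendsto_softEdge : Tendsto (softEdge P) (𝓝[>] 0) (𝓝 (majorityEdge P)) :=
  tendsto_pi_nhds.2 fun _ => tendsto_pi_nhds.2 fun _ => tendsto_sigmoid_div_nhdsGT_zero _

variable (P) in
lemma tendsto_softReach (K : ℕ) :
    Tendsto (fun τ => softReach P τ K) (𝓝[>] 0) (𝓝 (∑ k ∈ Icc 1 K, majorityEdge P ^ k)) :=
  tendsto_finsetSum _ fun k _ => (tendsto_softEdge P).pow k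

variable {astar : Fin n} (hcond : ∀ b, b ≠ astar → 1/2 < P astar b)
include hcond

lemma one_le_sum_pow_majorityEdge_condorcet {K : ℕ} (hK : 1 ≤ K) {b : Fin n}
    (hb : b ≠ astar) : 1 ≤ (∑ k ∈ Icc 1 K, majorityEdge P ^ k) astar b := by
  rw [Matrix.sum_apply]
  calc (1 : ℝ) = (majorityEdge P ^ 1) astar b := by
        rw [pow_one, majorityEdge_eq_one (hcond b hb)]
    _ ≤ ∑ k ∈ Icc 1 K, (majorityEdge P ^ k) astar b :=
        single_le_sum (fun k _ => Matrix.pow_apply_nonneg majorityEdge_nonneg k astar b)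
          (mem_Icc.2 ⟨le_rfl, hK⟩)

lemma tendsto_softReach_to_condorcet (hP : IsProbTournament P) (K : ℕ) {a : Fin n}
    (ha : a ≠ astar) : Tendsto (fun τ => softReach P τ K a astar) (𝓝[>] 0) (𝓝 0) := by
  have hcol : ∀ c, c ≠ astar → majorityEdge P c astar = 0 := fun c hc =>
    majorityEdge_eq_zero (by linarith [hP.2.1 c astar, hcond c hc])
  have hlim : (∑ k ∈ Icc 1 K, majorityEdge P ^ k) a astar = 0 := by
    rw [Matrix.sum_apply]
    exact sum_eq_zero fun k _ =>
      Matrix.pow_apply_eq_zero_of_forall_ne_apply_eq_zero hcol k ha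
  have := (tendsto_pi_nhds.1 (tendsto_pi_nhds.1 (tendsto_softReach P K) a)) astar
  rwa [hlim] at this

lemma eventually_tcScore_lt_of_ne_condorcet (hP : IsProbTournament P) (K : ℕ) {a : Fin n}
    (ha : a ≠ astar) {ε : ℝ} (hε : 0 < ε) :
    ∀ᶠ τ in 𝓝[>] 0, tcScore P τ K a < ε := by
  filter_upwards [self_mem_nhdsWithin,
    (tendsto_softReach_to_condorcet hcond hP K ha).eventually_lt_const hε] with τ hτ hreach
  exact (softmin_le hτ (by simpa using ha.symm)).trans_lt hreach

lemma eventually_lt_tcScore_condorcet {K : ℕ} (hK : 1 ≤ K)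
    (hs : ({astar}ᶜ : Finset (Fin n)).Nonempty) {c : ℝ} (hc : c < 1) :
    ∀ᶠ τ in 𝓝[>] 0, c < tcScore P τ K astar := by
  obtain ⟨c', hcc', hc'⟩ := exists_between hc
  have hreach : ∀ᶠ τ in 𝓝[>] 0, ∀ b ∈ ({astar}ᶜ : Finset (Fin n)),
      c' < softReach P τ K astar b :=
    (eventually_all_finset _).2 fun b hb =>
      (tendsto_pi_nhds.1 (tendsto_pi_nhds.1 (tendsto_softReach P K) astar) b).eventually_const_lt
        (hc'.trans_le (one_le_sum_pow_majorityEdge_condorcet hcond hK (by simpa using hb)))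
  have hlog : ∀ᶠ τ in 𝓝[>] 0, τ * Real.log #({astar}ᶜ : Finset (Fin n)) < c' - c := by
    have : Tendsto (fun τ : ℝ => τ * Real.log #({astar}ᶜ : Finset (Fin n))) (𝓝[>] 0) (𝓝 0) := by
      simpa using ((tendsto_id (x := 𝓝 (0 : ℝ))).mono_left nhdsWithin_le_nhds).mul_const _
    exact this.eventually_lt_const (sub_pos.2 hcc')
  filter_upwards [self_mem_nhdsWithin, hreach, hlog] with τ hτ hreach hlog
  have := sub_mul_log_card_le_softmin hτ hs fun b hb => (hreach b hb).le
  rw [tcScore]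
  linarith

end Majority

theorem condorcet_unique_top_cycle_general {n : ℕ} (P : Matrix (Fin n) (Fin n) ℝ)
    (hP : IsProbTournament P)
    (K : ℕ) (hK : 1 ≤ K) (astar : Fin n)
    (hcond : ∀ b, b ≠ astar → 1/2 < P astar b) :
    ∀ᶠ τ : ℝ in 𝓝[>] (0:ℝ), ∀ a, a ≠ astar → tcScore P τ K a < tcScore P τ K astar := by
  refine eventually_all.2 fun a => eventually_imp_distrib_left.2 fun ha => ?_
  filter_upwards [eventually_tcScore_lt_of_ne_condorcet hcond hP K ha one_half_pos,
    eventually_lt_tcScore_condorcet hcond hK ⟨a, by simpa using ha⟩ one_half_lt_one]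
    with τ hlt hgt
  exact hlt.trans hgt

/-- a Condorcet winner eventually uniquely maximizes the soft Top-Cycle score. -/
theorem condorcet_unique_top_cycle {n : ℕ} (hn : 2 ≤ n) (P : Matrix (Fin n) (Fin n) ℝ)
    (δ : ℝ) (hδ : 0 < δ) (hP : IsProbTournament P) (hmargin : HasMargin P δ)
    (K : ℕ) (hK : 1 ≤ K) (astar : Fin n)
    (hcond : ∀ b, b ≠ astar → 1/2 < P astar b) :
    ∀ᶠ τ : ℝ in 𝓝[>] (0:ℝ), ∀ a, a ≠ astar → tcScore P τ K a < tcScore P τ K astar :=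
  condorcet_unique_top_cycle_general P hP K hK astar hcond
end

section
/- (Condorcet uniqueness, Uncovered Set) Let P be a probabilistic tournament on n agents satisfying the margin assumption with margin δ > 0, and suppose a* is a Condorcet winner, i.e. P_{a*b} > 1/2 for all b ≠ a*. Then for all sufficiently small τ > 0, a* uniquely maximizes the soft Uncovered-Set score: u_τ(a*) > max_{a ≠ a*} u_τ(a). -/
open Filter Topology

lemma sigmoid_nonneg (z : ℝ) : 0 ≤ sigmoid z := by
  unfold sigmoid; positivity

lemma sigmoid_le_one (z : ℝ) : sigmoid z ≤ 1 := by
  unfold sigmoid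
  rw [div_le_one (by positivity)]
  nlinarith [Real.exp_pos (-z)]

lemma sigmoid_zero : sigmoid 0 = 1/2 := by
  unfold sigmoid; rw [neg_zero, Real.exp_zero]; norm_num

lemma sigmoid_le_exp (z : ℝ) : sigmoid z ≤ Real.exp z := by
  unfold sigmoid
  rw [div_le_iff₀ (by positivity)]
  have h := Real.exp_pos z
  have h2 : Real.exp z * Real.exp (-z) = 1 := by
    rw [← Real.exp_add]; simp
  nlinarith

lemma one_sub_exp_le_sigmoid (z : ℝ) : 1 - Real.exp (-z) ≤ sigmoid z := by
  unfold sigmoid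
  rw [le_div_iff₀ (by positivity)]
  nlinarith [Real.exp_pos (-z), sq_nonneg (Real.exp (-z))]

lemma le_smax {ι : Type*} {τ : ℝ} (hτ : 0 < τ) {s : Finset ι} (f : ι → ℝ) {i : ι}
    (hi : i ∈ s) : f i ≤ smax τ s f := by
  have h1 : Real.exp (f i / τ) ≤ ∑ j ∈ s, Real.exp (f j / τ) :=
    Finset.single_le_sum (f := fun j => Real.exp (f j / τ)) (fun j _ => (Real.exp_pos _).le) hi
  have h2 := Real.log_le_log (Real.exp_pos _) h1
  rw [Real.log_exp] at h2
  have h3 := mul_le_mul_of_nonneg_left h2 hτ.le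
  calc f i = τ * (f i / τ) := by field_simp
    _ ≤ smax τ s f := h3

lemma smax_le {ι : Type*} {τ : ℝ} (hτ : 0 < τ) {s : Finset ι} (hs : s.Nonempty)
    (f : ι → ℝ) {M : ℝ} (hM : ∀ i ∈ s, f i ≤ M) :
    smax τ s f ≤ τ * Real.log s.card + M := by
  have hcard : (0:ℝ) < s.card := by
    exact_mod_cast Finset.card_pos.mpr hs
  have h1 : ∑ j ∈ s, Real.exp (f j / τ) ≤ s.card * Real.exp (M / τ) := by
    calc ∑ j ∈ s, Real.exp (f j / τ) ≤ ∑ _j ∈ s, Real.exp (M / τ) :=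
          Finset.sum_le_sum (fun j hj => Real.exp_le_exp.mpr
            (div_le_div_of_nonneg_right (hM j hj) hτ.le))
      _ = s.card * Real.exp (M / τ) := by rw [Finset.sum_const, nsmul_eq_mul]
  have hpos : (0:ℝ) < ∑ j ∈ s, Real.exp (f j / τ) :=
    Finset.sum_pos (fun j _ => Real.exp_pos _) hs
  have h2 := Real.log_le_log hpos h1
  rw [Real.log_mul (ne_of_gt hcard) (Real.exp_ne_zero _), Real.log_exp] at h2
  have h3 := mul_le_mul_of_nonneg_left h2 hτ.le
  calc smax τ s f ≤ τ * (Real.log s.card + M / τ) := h3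
    _ = τ * Real.log s.card + M := by field_simp

lemma pointwise_bound {n : ℕ} (hn : 2 ≤ n) (P : Matrix (Fin n) (Fin n) ℝ)
    (δ : ℝ) (hδ : 0 < δ) (hP : IsProbTournament P) (hmargin : HasMargin P δ)
    (astar : Fin n) (hcond : ∀ b, b ≠ astar → 1/2 < P astar b)
    (τ : ℝ) (hτ : 0 < τ) (hE : Real.exp (-δ/τ) ≤ 1/10)
    (hL : τ * Real.log n ≤ 1/10) (a : Fin n) (ha : a ≠ astar) :
    ucScore P τ a < ucScore P τ astar := by
  obtain ⟨h01, hsum, hdiag⟩ := hP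
  have hD0 : ∀ x y, 0 ≤ softEdge P τ x y := fun x y => sigmoid_nonneg _
  have hD1 : ∀ x y, softEdge P τ x y ≤ 1 := fun x y => sigmoid_le_one _
  have hDself : ∀ x, softEdge P τ x x = 1/2 := by
    intro x
    unfold softEdge
    rw [hdiag x, sub_self, zero_div, sigmoid_zero]
  have hbig : ∀ b, b ≠ astar → 1 - 1/10 ≤ softEdge P τ astar b := by
    intro b hb
    have hm := hmargin astar b (Ne.symm hb)
    have hc := hcond b hb
    rw [abs_of_pos (by linarith)] at hm
    have h1 : δ / τ ≤ (P astar b - 1/2) / τ := div_le_div_of_nonneg_right hm hτ.le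
    have h2 : Real.exp (-((P astar b - 1/2) / τ)) ≤ Real.exp (-δ/τ) := by
      apply Real.exp_le_exp.mpr
      rw [neg_div]
      linarith
    have h3 := one_sub_exp_le_sigmoid ((P astar b - 1/2) / τ)
    unfold softEdge
    linarith
  have hsmall : ∀ c, c ≠ astar → softEdge P τ c astar ≤ 1/10 := by
    intro c hc
    have hm := hmargin astar c (Ne.symm hc)
    have hcd := hcond c hc
    rw [abs_of_pos (by linarith)] at hm
    have hrev : P c astar = 1 - P astar c := by have := hsum c astar; linarith
    have h1 : (P c astar - 1/2) / τ ≤ -δ/τ := by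
      have hstep : P c astar - 1/2 ≤ -δ := by rw [hrev]; linarith
      exact div_le_div_of_nonneg_right hstep hτ.le
    have h2 : Real.exp ((P c astar - 1/2) / τ) ≤ Real.exp (-δ/τ) := Real.exp_le_exp.mpr h1
    have h3 := sigmoid_le_exp ((P c astar - 1/2) / τ)
    unfold softEdge
    linarith
  have hlogn : 0 ≤ Real.log n := Real.log_nonneg (by exact_mod_cast Nat.one_le_of_lt hn)
  have hcardcompl : ∀ x : Fin n, τ * Real.log (({x}ᶜ : Finset (Fin n)).card) ≤ 1/10 := by
    intro x
    have hcd : ({x}ᶜ : Finset (Fin n)).card = n - 1 := by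
      rw [Finset.card_compl, Finset.card_singleton, Fintype.card_fin]
    have hle : ((({x}ᶜ : Finset (Fin n)).card : ℝ)) ≤ (n : ℝ) := by
      rw [hcd]; exact_mod_cast Nat.sub_le n 1
    have hpos : (0:ℝ) < (({x}ᶜ : Finset (Fin n)).card : ℝ) := by
      rw [hcd]; exact_mod_cast Nat.sub_pos_of_lt (by omega)
    have := Real.log_le_log hpos hle
    nlinarith [mul_le_mul_of_nonneg_left this hτ.le]
  have hcarduniv : τ * Real.log ((Finset.univ : Finset (Fin n)).card) ≤ 1/10 := by
    rw [Finset.card_univ, Fintype.card_fin]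
    exact hL
  have hnecompl : ∀ x : Fin n, ({x}ᶜ : Finset (Fin n)).Nonempty := by
    intro x
    obtain ⟨b, hb⟩ := Fintype.exists_ne_of_one_lt_card (by rw [Fintype.card_fin]; omega) x
    exact ⟨b, by simp [hb]⟩
  have hneuniv : (Finset.univ : Finset (Fin n)).Nonempty := ⟨astar, Finset.mem_univ _⟩
  have hEpos : 0 ≤ Real.exp (-δ/τ) := (Real.exp_pos _).le
  -- upper bound on smax of cover scores at astar
  have hcov_small : ∀ c ∈ ({astar}ᶜ : Finset (Fin n)), coverScore P τ c astar ≤ 1/10 := by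
    intro c hc
    have hc' : c ≠ astar := by simpa using hc
    unfold coverScore
    set S := smax τ (Finset.univ : Finset (Fin n))
      (fun b => softEdge P τ astar b - softEdge P τ c b) with hSdef
    have hS0 : (0:ℝ) ≤ S := by
      have h1 : softEdge P τ astar astar - softEdge P τ c astar ≤ S :=
        le_smax hτ (fun b => softEdge P τ astar b - softEdge P τ c b) (Finset.mem_univ astar)
      have h2 := hsmall c hc'
      rw [hDself astar] at h1
      linarith
    nlinarith [hD0 c astar, hsmall c hc']
  have hsmax_astar : smax τ ({astar}ᶜ : Finset (Fin n)) (fun c => coverScore P τ c astar)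
      ≤ 2/10 := by
    have := smax_le hτ (hnecompl astar) (fun c => coverScore P τ c astar) hcov_small
    linarith [hcardcompl astar]
  have huc_astar : 8/10 ≤ ucScore P τ astar := by
    unfold ucScore
    linarith
  -- lower bound on cover score of astar over a
  have hmem : astar ∈ ({a}ᶜ : Finset (Fin n)) := by simp [Ne.symm ha]
  have hSle : smax τ (Finset.univ : Finset (Fin n))
      (fun b => softEdge P τ a b - softEdge P τ astar b) ≤ 2/10 := by
    have hbd : ∀ b ∈ (Finset.univ : Finset (Fin n)),
        softEdge P τ a b - softEdge P τ astar b ≤ 1/10 := by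
      intro b _
      by_cases hb : b = astar
      · rw [hb, hDself astar]
        have := hsmall a ha
        linarith
      · have := hbig b hb
        have := hD1 a b
        linarith
    have := smax_le hτ hneuniv (fun b => softEdge P τ a b - softEdge P τ astar b) hbd
    linarith [hcarduniv]
  have hcov_big : 72/100 ≤ coverScore P τ astar a := by
    unfold coverScore
    have h1 := hbig a ha
    have h2 := hD1 astar a
    nlinarith [hSle]
  have hsmax_a : 72/100 ≤ smax τ ({a}ᶜ : Finset (Fin n)) (fun c => coverScore P τ c a) := by
    have := le_smax hτ (fun c => coverScore P τ c a) hmem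
    linarith
  have huc_a : ucScore P τ a ≤ 28/100 := by
    unfold ucScore
    linarith
  linarith

/-- a Condorcet winner eventually uniquely maximizes the soft Uncovered-Set score. -/
theorem condorcet_unique_uncovered {n : ℕ} (hn : 2 ≤ n) (P : Matrix (Fin n) (Fin n) ℝ)
    (δ : ℝ) (hδ : 0 < δ) (hP : IsProbTournament P) (hmargin : HasMargin P δ)
    (astar : Fin n) (hcond : ∀ b, b ≠ astar → 1/2 < P astar b) :
    ∀ᶠ τ : ℝ in 𝓝[>] (0:ℝ), ∀ a, a ≠ astar → ucScore P τ a < ucScore P τ astar := by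
  have h1 : ∀ᶠ τ : ℝ in 𝓝[>] (0:ℝ), Real.exp (-δ/τ) ≤ 1/10 := by
    have hinv : Tendsto (fun τ : ℝ => τ⁻¹) (𝓝[>] (0:ℝ)) atTop := tendsto_inv_nhdsGT_zero
    have hmul : Tendsto (fun τ : ℝ => δ * τ⁻¹) (𝓝[>] (0:ℝ)) atTop :=
      (tendsto_const_mul_atTop_of_pos hδ).mpr hinv
    have hneg : Tendsto (fun τ : ℝ => -δ/τ) (𝓝[>] (0:ℝ)) atBot := by
      have := tendsto_neg_atTop_atBot.comp hmul
      simpa [Function.comp_def, neg_div, div_eq_mul_inv, neg_mul] using this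
    have hexp : Tendsto (fun τ : ℝ => Real.exp (-δ/τ)) (𝓝[>] (0:ℝ)) (𝓝 0) :=
      Real.tendsto_exp_atBot.comp hneg
    filter_upwards [hexp.eventually_lt_const (by norm_num : (0:ℝ) < 1/10)] with τ h
    linarith
  have h2 : ∀ᶠ τ : ℝ in 𝓝[>] (0:ℝ), τ * Real.log n ≤ 1/10 := by
    have ht : Tendsto (fun τ : ℝ => τ * Real.log n) (𝓝[>] (0:ℝ)) (𝓝 0) := by
      have : Tendsto (fun τ : ℝ => τ * Real.log n) (𝓝 (0:ℝ)) (𝓝 (0 * Real.log n)) :=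
        (continuous_id.mul continuous_const).tendsto 0
      rw [zero_mul] at this
      exact this.mono_left nhdsWithin_le_nhds
    filter_upwards [ht.eventually_lt_const (by norm_num : (0:ℝ) < 1/10)] with τ h
    linarith
  have h3 : ∀ᶠ τ : ℝ in 𝓝[>] (0:ℝ), 0 < τ := eventually_mem_nhdsWithin
  filter_upwards [h1, h2, h3] with τ hE hL hτ
  exact fun a ha => pointwise_bound hn P δ hδ hP hmargin astar hcond τ hτ hE hL a ha
end
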